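/- Let ψ ∈ L²(ℝ²) be compactly supported and let c > 0. Then there exists a constant C > 0, depending only on c and supp ψ, such that for every integer j ≥ 0, every k ∈ ℤ with |k| ≤ ⌈2^{j/2}⌉, and every p ∈ ℤ², the number of m ∈ ℤ² such that supp ψ_{j,k,m} ∩ Q_{j,p} ≠ ∅ is at most C·2^{j/2}. -/

import Mathlib

noncomputable section

open MeasureTheory Real Set

/-- The plane `ℝ²`. -/
abbrev R2 := ℝ × ℝ

/-- The unit square `[0,1]²`. -/
def unitSq : Set R2 := Set.Icc (0:ℝ) 1 ×ˢ Set.Icc (0:ℝ) 1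

/-- The shearlet `ψ_{j,k,m}(x) = 2^{3j/4} ψ(S_k A_{2^j} x − c m)`, where
`A_{2^j} = diag(2^j, 2^{j/2})` and `S_k = [[1,k],[0,1]]`. -/
def shearlet (ψ : R2 → ℂ) (c : ℝ) (j k : ℤ) (m : ℤ × ℤ) : R2 → ℂ :=
  fun x => (((2:ℝ) ^ (3 * (j:ℝ) / 4) : ℝ) : ℂ) *
    ψ ((2:ℝ) ^ (j:ℝ) * x.1 + (k : ℝ) * (2:ℝ) ^ ((j:ℝ)/2) * x.2 - c * m.1,
       (2:ℝ) ^ ((j:ℝ)/2) * x.2 - c * m.2)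

/-- The `L²(ℝ²)` inner product `⟨f,g⟩ = ∫ f ḡ`. -/
def ip (f g : R2 → ℂ) : ℂ := ∫ x : R2, f x * (starRingEnd ℂ) (g x)

/-- The dyadic cube `Q_{j,p} = [−2^{−j/2}, 2^{−j/2}]² + 2^{−j/2} p`. -/
def Qjp (j : ℤ) (p : ℤ × ℤ) : Set R2 :=
  {x : R2 | |x.1 - (2:ℝ) ^ (-(j:ℝ)/2) * p.1| ≤ (2:ℝ) ^ (-(j:ℝ)/2) ∧
            |x.2 - (2:ℝ) ^ (-(j:ℝ)/2) * p.2| ≤ (2:ℝ) ^ (-(j:ℝ)/2)}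

/-! Put `a = 2^{j/2}`. If `x ∈ Q_{j,p}` then `u = a x` satisfies `‖u - p‖_∞ ≤ 1`, and
`S_k A_{2^j} x - c m = (a u₁ + k u₂ - c m₁, u₂ - c m₂)`. When this point lies in a ball
`B(0, R) ⊇ supp ψ`, `c m₂` is within `1 + R` of `p₂` and `c m₁` is within
`a + |k| + R ≤ (3 + R) a` of `a p₁ + k p₂`, so `m` ranges over a product of two integer
intervals, of lengths `O(a)` and `O(1)`. -/

lemma setOf_abs_mul_intCast_sub_le_subset_Icc {c : ℝ} (hc : 0 < c) (t L : ℝ) :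
    {n : ℤ | |c * n - t| ≤ L} ⊆ Icc ⌈(t - L) / c⌉ ⌊(t + L) / c⌋ := by
  intro n (hn : |c * n - t| ≤ L)
  obtain ⟨hlo, hhi⟩ := abs_le.1 hn
  exact ⟨Int.ceil_le.2 ((div_le_iff₀ hc).2 (by linarith)),
    Int.le_floor.2 ((le_div_iff₀ hc).2 (by linarith))⟩

lemma finite_setOf_abs_mul_intCast_sub_le {c : ℝ} (hc : 0 < c) (t L : ℝ) :
    {n : ℤ | |c * n - t| ≤ L}.Finite :=
  (finite_Icc _ _).subset (setOf_abs_mul_intCast_sub_le_subset_Icc hc t L)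

lemma ncard_setOf_abs_mul_intCast_sub_le {c : ℝ} (hc : 0 < c) (t : ℝ) {L : ℝ} (hL : 0 ≤ L) :
    ({n : ℤ | |c * n - t| ≤ L}.ncard : ℝ) ≤ 2 * L / c + 1 := by
  set a := ⌈(t - L) / c⌉
  set b := ⌊(t + L) / c⌋
  have hlen : ((b + 1 - a : ℤ) : ℝ) ≤ 2 * L / c + 1 := by
    have hb := Int.floor_le ((t + L) / c)
    have ha := Int.le_ceil ((t - L) / c)
    have hdiff : (t + L) / c - (t - L) / c = 2 * L / c := by ring
    push_cast
    linarith
  calc ({n : ℤ | |c * n - t| ≤ L}.ncard : ℝ)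
      ≤ (Icc a b).ncard := by
        exact_mod_cast ncard_le_ncard (setOf_abs_mul_intCast_sub_le_subset_Icc hc t L)
          (finite_Icc a b)
    _ = ((max (b + 1 - a) 0 : ℤ) : ℝ) := by
        rw [← Finset.coe_Icc, ncard_coe_finset, Int.card_Icc, ← Int.toNat_eq_max,
          Int.cast_natCast]
    _ ≤ 2 * L / c + 1 := by
        rw [Int.cast_max, Int.cast_zero]
        exact max_le hlen (by positivity)

lemma tsupport_shearlet_subset (ψ : R2 → ℂ) (c : ℝ) (j k : ℤ) (m : ℤ × ℤ) :
    tsupport (shearlet ψ c j k m) ⊆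
      (fun x : R2 => ((2:ℝ) ^ (j:ℝ) * x.1 + k * (2:ℝ) ^ ((j:ℝ) / 2) * x.2 - c * m.1,
        (2:ℝ) ^ ((j:ℝ) / 2) * x.2 - c * m.2)) ⁻¹' tsupport ψ :=
  tsupport_mul_subset_right.trans (tsupport_comp_subset_preimage ψ (by fun_prop))

lemma abs_sub_le_of_shear_of_mem_cube {a k c x₁ x₂ p₁ p₂ m₁ m₂ R : ℝ} (ha : 0 < a)
    (hx₁ : |x₁ - a⁻¹ * p₁| ≤ a⁻¹) (hx₂ : |x₂ - a⁻¹ * p₂| ≤ a⁻¹)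
    (hy₁ : |a ^ 2 * x₁ + k * a * x₂ - c * m₁| ≤ R) (hy₂ : |a * x₂ - c * m₂| ≤ R) :
    |c * m₁ - (a * p₁ + k * p₂)| ≤ a + |k| + R ∧ |c * m₂ - p₂| ≤ 1 + R := by
  have hu : ∀ {x p : ℝ}, |x - a⁻¹ * p| ≤ a⁻¹ → |a * x - p| ≤ 1 := fun {x p} h => by
    calc |a * x - p| = a * |x - a⁻¹ * p| := by
          rw [← abs_of_pos ha, ← abs_mul, abs_of_pos ha, mul_sub, mul_inv_cancel_left₀ ha.ne']
      _ ≤ a * a⁻¹ := by gcongr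
      _ = 1 := mul_inv_cancel₀ ha.ne'
  have hu₁ := hu hx₁
  have hu₂ := hu hx₂
  constructor
  · calc |c * m₁ - (a * p₁ + k * p₂)|
        = |a * (a * x₁ - p₁) + k * (a * x₂ - p₂) - (a ^ 2 * x₁ + k * a * x₂ - c * m₁)| := by
          ring_nf
      _ ≤ a * |a * x₁ - p₁| + |k| * |a * x₂ - p₂| + |a ^ 2 * x₁ + k * a * x₂ - c * m₁| := by
          rw [← abs_of_pos ha, ← abs_mul, ← abs_mul, abs_of_pos ha]
          exact (abs_sub _ _).trans (add_le_add_left (abs_add_le _ _) _)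
      _ ≤ a * 1 + |k| * 1 + R := by gcongr
      _ = a + |k| + R := by ring
  · calc |c * m₂ - p₂| = |(a * x₂ - p₂) - (a * x₂ - c * m₂)| := by ring_nf
      _ ≤ |a * x₂ - p₂| + |a * x₂ - c * m₂| := abs_sub _ _
      _ ≤ 1 + R := add_le_add hu₂ hy₂

lemma shearlet_index_bounds {ψ : R2 → ℂ} {c R : ℝ} (hR : tsupport ψ ⊆ Metric.closedBall 0 R)
    {j k : ℤ} {p m : ℤ × ℤ} (hm : (tsupport (shearlet ψ c j k m) ∩ Qjp j p).Nonempty) :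
    |c * m.1 - ((2:ℝ) ^ ((j:ℝ) / 2) * p.1 + k * p.2)| ≤ (2:ℝ) ^ ((j:ℝ) / 2) + |(k:ℝ)| + R ∧
      |c * m.2 - p.2| ≤ 1 + R := by
  obtain ⟨x, hxψ, hx₁, hx₂⟩ := hm
  have hy := mem_closedBall_zero_iff.1 (hR (tsupport_shearlet_subset ψ c j k m hxψ))
  have ha : 0 < (2:ℝ) ^ ((j:ℝ) / 2) := by positivity
  have hinv : (2:ℝ) ^ (-(j:ℝ) / 2) = ((2:ℝ) ^ ((j:ℝ) / 2))⁻¹ := by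
    rw [neg_div, rpow_neg zero_le_two]
  have hsq : (2:ℝ) ^ (j:ℝ) = ((2:ℝ) ^ ((j:ℝ) / 2)) ^ 2 := by
    rw [← rpow_natCast, ← rpow_mul zero_le_two]
    norm_num
  rw [hinv] at hx₁ hx₂
  rw [hsq] at hy
  exact abs_sub_le_of_shear_of_mem_cube ha hx₁ hx₂ ((norm_fst_le _).trans hy)
    ((norm_snd_le _).trans hy)

lemma setOf_meets_cube_subset_prod {ψ : R2 → ℂ} {c R : ℝ} (hR0 : 0 ≤ R)
    (hR : tsupport ψ ⊆ Metric.closedBall 0 R) {j k : ℤ} (hj : 0 ≤ j)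
    (hk : |k| ≤ ⌈(2:ℝ) ^ ((j:ℝ) / 2)⌉) (p : ℤ × ℤ) :
    {m : ℤ × ℤ | (tsupport (shearlet ψ c j k m) ∩ Qjp j p).Nonempty} ⊆
      {n : ℤ | |c * n - ((2:ℝ) ^ ((j:ℝ) / 2) * p.1 + k * p.2)| ≤ (3 + R) * (2:ℝ) ^ ((j:ℝ) / 2)}
        ×ˢ {n : ℤ | |c * n - p.2| ≤ 1 + R} := by
  set a := (2:ℝ) ^ ((j:ℝ) / 2)
  have ha : 1 ≤ a := one_le_rpow one_le_two (by positivity)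
  have hka : |(k:ℝ)| ≤ a + 1 := by
    have : ((|k| : ℤ) : ℝ) ≤ ⌈a⌉ := by exact_mod_cast hk
    linarith [Int.cast_abs (R := ℝ) (a := k), Int.ceil_lt_add_one a]
  intro m hm
  have hb := shearlet_index_bounds hR hm
  exact ⟨hb.1.trans (by nlinarith), hb.2⟩

theorem counting_shearlets_meeting_cube_general
    (c : ℝ) (hc : 0 < c) (ψ : R2 → ℂ)
    (hψs : HasCompactSupport ψ) :
    ∃ C > 0, ∀ (j k : ℤ) (p : ℤ × ℤ), 0 ≤ j → |k| ≤ ⌈(2:ℝ) ^ ((j:ℝ)/2)⌉ →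
      {m : ℤ × ℤ | (tsupport (shearlet ψ c j k m) ∩ Qjp j p).Nonempty}.Finite ∧
      (({m : ℤ × ℤ | (tsupport (shearlet ψ c j k m) ∩ Qjp j p).Nonempty}.ncard : ℝ)
        ≤ C * (2:ℝ) ^ ((j:ℝ)/2)) := by
  obtain ⟨R, hR0, hR⟩ := hψs.isBounded.subset_closedBall_lt 0 0
  refine ⟨(2 * (3 + R) / c + 1) * (2 * (1 + R) / c + 1), by positivity,
    fun j k p hj hk => ?_⟩
  set a := (2:ℝ) ^ ((j:ℝ) / 2)
  have ha : 1 ≤ a := one_le_rpow one_le_two (by positivity)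
  set S₁ := {n : ℤ | |c * n - (a * p.1 + k * p.2)| ≤ (3 + R) * a}
  set S₂ := {n : ℤ | |c * n - p.2| ≤ 1 + R}
  have hsub : _ ⊆ S₁ ×ˢ S₂ := setOf_meets_cube_subset_prod hR0.le hR hj hk p
  have hfin : (S₁ ×ˢ S₂).Finite := (finite_setOf_abs_mul_intCast_sub_le hc _ _).prod
    (finite_setOf_abs_mul_intCast_sub_le hc _ _)
  refine ⟨hfin.subset hsub, ?_⟩
  calc _ ≤ (S₁.ncard : ℝ) * S₂.ncard := by
        exact_mod_cast (ncard_le_ncard hsub hfin).trans_eq ncard_prod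
    _ ≤ (2 * ((3 + R) * a) / c + 1) * (2 * (1 + R) / c + 1) := by
        gcongr
        · exact ncard_setOf_abs_mul_intCast_sub_le hc _ (by positivity)
        · exact ncard_setOf_abs_mul_intCast_sub_le hc _ (by positivity)
    _ ≤ (2 * (3 + R) / c + 1) * a * (2 * (1 + R) / c + 1) := by
        gcongr
        linear_combination ha
    _ = _ := by ring

/-- **Lemma (counting shearlets meeting a dyadic cube).** Let `ψ ∈ L²(ℝ²)` be compactly
supported and `c > 0`. Then there is `C > 0` (depending only on `c` and `supp ψ`) such
that for every `j ≥ 0`, `|k| ≤ ⌈2^{j/2}⌉` and `p ∈ ℤ²`, the number of `m ∈ ℤ²` with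
`supp ψ_{j,k,m} ∩ Q_{j,p} ≠ ∅` is at most `C · 2^{j/2}`. -/
theorem counting_shearlets_meeting_cube
    (c : ℝ) (hc : 0 < c) (ψ : R2 → ℂ)
    (hψs : HasCompactSupport ψ) (hψ2 : MemLp ψ 2 volume) :
    ∃ C > 0, ∀ (j k : ℤ) (p : ℤ × ℤ), 0 ≤ j → |k| ≤ ⌈(2:ℝ) ^ ((j:ℝ)/2)⌉ →
      {m : ℤ × ℤ | (tsupport (shearlet ψ c j k m) ∩ Qjp j p).Nonempty}.Finite ∧
      (({m : ℤ × ℤ | (tsupport (shearlet ψ c j k m) ∩ Qjp j p).Nonempty}.ncard : ℝ)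
        ≤ C * (2:ℝ) ^ ((j:ℝ)/2)) :=
  counting_shearlets_meeting_cube_general c hc ψ hψs
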